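/- Suppose every coupling J_B (B ∈ 𝔅) is independently Gaussian with mean J_{0,B} ∈ ℝ and variance Λ_B² > 0. Fix A ∈ 𝔅. Then the quenched average E[ (J_{0,A} − J_A) ⟨σ_A⟩_J ]_{{J_{0,B}, Λ_B²}} satisfies E[ (J_{0,A} − J_A) ⟨σ_A⟩_J ]_{{J_{0,B}, Λ_B²}} ≥ E[ −J_A tanh(β J_A) ]_{{0, Λ_A²}}, where the right-hand side is the expectation of −x tanh(β x) under a centered Gaussian with variance Λ_A² and is independent of all means J_{0,B} and of all other interactions. -/

import Mathlib

open MeasureTheory Real Finset ProbabilityTheory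

/-- The spin value of a Boolean: `true ↦ 1`, `false ↦ -1`. -/
noncomputable def spinVal (b : Bool) : ℝ := if b then 1 else -1

/-- `σ_B = ∏ i ∈ B, σ_i`. -/
noncomputable def sigmaSet {V : Type} (σ : V → Bool) (B : Finset V) : ℝ :=
  ∏ i ∈ B, spinVal (σ i)

/-- The Gibbs (thermal) average `⟨σ_A⟩_J` at inverse temperature `β` for the Hamiltonian
`H(σ) = -∑_{B ∈ ℬ} J_B σ_B`. -/
noncomputable def gibbsAvg {V : Type} [Fintype V] [DecidableEq V] (β : ℝ)
    (ℬ : Finset (Finset V)) (J : ℬ → ℝ) (A : Finset V) : ℝ :=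
  (∑ σ : V → Bool, sigmaSet σ A * Real.exp (β * ∑ B : ℬ, J B * sigmaSet σ (B : Finset V))) /
  (∑ σ : V → Bool, Real.exp (β * ∑ B : ℬ, J B * sigmaSet σ (B : Finset V)))

/-- The product measure of independent Gaussian couplings `J_B ~ N(J_{0,B}, Λ_B²)`. -/
noncomputable def gaussQuenched {V : Type} (ℬ : Finset (Finset V))
    (J0 : Finset V → ℝ) (Λ : Finset V → NNReal) : Measure (ℬ → ℝ) :=
  Measure.pi fun B => gaussianReal (J0 (B : Finset V)) (Λ (B : Finset V) ^ 2)

/-!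
Reflecting the coupling `J_A ↦ 2 J_{0,A} - J_A` preserves the Gaussian product measure, so the
quenched energy is the average of its integrand at `J` and at the reflected couplings. With the
other couplings fixed, `⟨σ_A⟩ = f (β J_A)` where `f t = (P eᵗ - Q e⁻ᵗ) / (P eᵗ + Q e⁻ᵗ)` for some
`P, Q ≥ 0`, and every such `f` satisfies `u (f (s + u) - f (s - u)) ≤ 2 u tanh u`. With
`g = J_A - J_{0,A} ~ N(0, Λ_A²)` the symmetrised integrand is therefore at least `-g tanh (β g)`.
-/

open Function

noncomputable def spinAvg (P Q t : ℝ) : ℝ :=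
  (P * exp t - Q * exp (-t)) / (P * exp t + Q * exp (-t))

lemma spinAvg_add (P Q s t : ℝ) :
    spinAvg P Q (s + t) = spinAvg (P * exp s) (Q * exp (-s)) t := by
  simp only [spinAvg, neg_add, exp_add, mul_assoc]

lemma mul_spinAvg_sub_le {P Q : ℝ} (hP : 0 ≤ P) (hQ : 0 ≤ Q) (u : ℝ) :
    u * (spinAvg P Q u - spinAvg P Q (-u)) ≤ 2 * u * tanh u := by
  set a := exp u
  set b := exp (-u)
  have ha : 0 < a := exp_pos u
  have hb : 0 < b := exp_pos (-u)
  have hmono : 0 ≤ u * (a - b) := by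
    rcases le_total 0 u with hu | hu
    · exact mul_nonneg hu (sub_nonneg.2 (exp_le_exp.2 (by linarith)))
    · exact mul_nonneg_of_nonpos_of_nonpos hu (sub_nonpos.2 (exp_le_exp.2 (by linarith)))
  have htanh : tanh u = (a - b) / (a + b) := by
    rw [tanh_eq_sinh_div_cosh, sinh_eq, cosh_eq, div_div_div_cancel_right₀ two_ne_zero]
  rw [htanh]
  by_cases h0 : P = 0 ∧ Q = 0
  · obtain ⟨rfl, rfl⟩ := h0
    have : 0 ≤ u * (a - b) / (a + b) := div_nonneg hmono (by positivity)
    simp only [spinAvg, zero_mul, sub_zero, add_zero, div_zero, neg_neg, mul_zero]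
    rw [mul_assoc, ← mul_div_assoc]
    exact mul_nonneg zero_le_two this
  have hD : ∀ {c d : ℝ}, 0 < c → 0 < d → 0 < P * c + Q * d := fun hc hd => by
    rcases not_and_or.1 h0 with h | h
    · exact add_pos_of_pos_of_nonneg (mul_pos (hP.lt_of_ne' h) hc) (by positivity)
    · exact add_pos_of_nonneg_of_pos (by positivity) (mul_pos (hQ.lt_of_ne' h) hd)
  have hD₁ := hD ha hb
  have hD₂ := hD hb ha
  simp only [spinAvg, neg_neg]
  rw [div_sub_div _ _ hD₁.ne' hD₂.ne', mul_div_assoc', mul_div_assoc',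
    div_le_div_iff₀ (mul_pos hD₁ hD₂) (by positivity)]
  -- cleared of denominators, the gap between the two sides is `2 u (a - b) a b (P - Q) ^ 2`
  nlinarith [mul_nonneg (mul_nonneg hmono (sq_nonneg (P - Q))) (mul_pos ha hb).le]

lemma mul_spinAvg_add_sub_sub_le {P Q : ℝ} (hP : 0 ≤ P) (hQ : 0 ≤ Q) (s u : ℝ) :
    u * (spinAvg P Q (s + u) - spinAvg P Q (s - u)) ≤ 2 * u * tanh u := by
  rw [sub_eq_add_neg s, spinAvg_add, spinAvg_add]
  exact mul_spinAvg_sub_le (by positivity) (by positivity) u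

lemma sigmaSet_eq_one_or_neg_one {V : Type} (σ : V → Bool) (B : Finset V) :
    sigmaSet σ B = 1 ∨ sigmaSet σ B = -1 :=
  Finset.prod_induction _ (fun x : ℝ => x = 1 ∨ x = -1)
    (by rintro _ _ (rfl | rfl) (rfl | rfl) <;> norm_num) (Or.inl rfl)
    (fun i _ => by cases σ i <;> simp [spinVal])

lemma sum_update_mul {ι : Type*} [Fintype ι] [DecidableEq ι] (J s : ι → ℝ) (i : ι) (x : ℝ) :
    ∑ j, update J i x j * s j = x * s i + ∑ j, update J i 0 j * s j := by
  rw [← sub_eq_iff_eq_add, ← Finset.sum_sub_distrib]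
  simp only [update_apply, ite_mul, zero_mul, ite_sub_ite, sub_self, sub_zero]
  simp

lemma gibbsAvg_update_eq_spinAvg {V : Type} [Fintype V] [DecidableEq V] (β : ℝ)
    (ℬ : Finset (Finset V)) (J : ℬ → ℝ) {A : Finset V} (hA : A ∈ ℬ) :
    ∃ P Q : ℝ, 0 ≤ P ∧ 0 ≤ Q ∧
      ∀ x, gibbsAvg β ℬ (update J ⟨A, hA⟩ x) A = spinAvg P Q (β * x) := by
  set w : (V → Bool) → ℝ :=
    fun σ => exp (β * ∑ B : ℬ, update J ⟨A, hA⟩ 0 B * sigmaSet σ (B : Finset V))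
  refine ⟨∑ σ, if sigmaSet σ A = 1 then w σ else 0, ∑ σ, if sigmaSet σ A = 1 then 0 else w σ,
    sum_nonneg fun σ _ => by positivity, sum_nonneg fun σ _ => by positivity, fun x => ?_⟩
  have hweight : ∀ σ, exp (β * ∑ B : ℬ, update J ⟨A, hA⟩ x B * sigmaSet σ (B : Finset V)) =
      exp (β * x) * (if sigmaSet σ A = 1 then w σ else 0) +
        exp (-(β * x)) * (if sigmaSet σ A = 1 then 0 else w σ) := by
    intro σ
    rw [sum_update_mul _ (fun B : ℬ => sigmaSet σ (B : Finset V)), mul_add, exp_add]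
    rcases sigmaSet_eq_one_or_neg_one σ A with h | h <;> norm_num [h, w]
  have hspin : ∀ σ,
      sigmaSet σ A * exp (β * ∑ B : ℬ, update J ⟨A, hA⟩ x B * sigmaSet σ (B : Finset V)) =
      exp (β * x) * (if sigmaSet σ A = 1 then w σ else 0) -
        exp (-(β * x)) * (if sigmaSet σ A = 1 then 0 else w σ) := by
    intro σ
    rw [hweight]
    rcases sigmaSet_eq_one_or_neg_one σ A with h | h <;> norm_num [h]
  simp only [gibbsAvg, hspin]
  simp only [hweight, sum_add_distrib, sum_sub_distrib, ← mul_sum, spinAvg]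
  ring

lemma abs_sigmaSet {V : Type} (σ : V → Bool) (B : Finset V) : |sigmaSet σ B| = 1 := by
  rcases sigmaSet_eq_one_or_neg_one σ B with h | h <;> simp [h]

lemma abs_gibbsAvg_le_one {V : Type} [Fintype V] [DecidableEq V] (β : ℝ)
    (ℬ : Finset (Finset V)) (J : ℬ → ℝ) (A : Finset V) : |gibbsAvg β ℬ J A| ≤ 1 := by
  have hZ := sum_nonneg fun σ (_ : σ ∈ (univ : Finset (V → Bool))) =>
    (exp_pos (β * ∑ B : ℬ, J B * sigmaSet σ (B : Finset V))).le
  rw [gibbsAvg, abs_div, abs_of_nonneg hZ]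
  refine div_le_one_of_le₀ ((abs_sum_le_sum_abs _ _).trans (sum_le_sum fun σ _ => ?_)) hZ
  rw [abs_mul, abs_sigmaSet, one_mul, abs_of_pos (exp_pos _)]

lemma two_mul_neg_mul_tanh_le_add_reflect {V : Type} [Fintype V] [DecidableEq V]
    (ℬ : Finset (Finset V)) {β : ℝ} (hβ : 0 < β) (J : ℬ → ℝ) {A : Finset V} (hA : A ∈ ℬ)
    (m : ℝ) :
    2 * (-(J ⟨A, hA⟩ - m) * tanh (β * (J ⟨A, hA⟩ - m))) ≤
      (m - J ⟨A, hA⟩) * gibbsAvg β ℬ J A +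
        (m - update J ⟨A, hA⟩ (2 * m - J ⟨A, hA⟩) ⟨A, hA⟩) *
          gibbsAvg β ℬ (update J ⟨A, hA⟩ (2 * m - J ⟨A, hA⟩)) A := by
  obtain ⟨P, Q, hP, hQ, hgibbs⟩ := gibbsAvg_update_eq_spinAvg β ℬ J hA
  obtain ⟨g, hg⟩ : ∃ g, J ⟨A, hA⟩ = m + g := ⟨J ⟨A, hA⟩ - m, by ring⟩
  have hplus : gibbsAvg β ℬ J A = spinAvg P Q (β * m + β * g) := by
    rw [← mul_add, ← hg, ← hgibbs, update_eq_self]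
  have hscaled : g * (spinAvg P Q (β * m + β * g) - spinAvg P Q (β * m - β * g)) ≤
      2 * g * tanh (β * g) :=
    le_of_mul_le_mul_left (by linarith [mul_spinAvg_add_sub_sub_le hP hQ (β * m) (β * g)]) hβ
  rw [update_self, hgibbs, hplus, hg, add_sub_cancel_left,
    show β * (2 * m - (m + g)) = β * m - β * g by ring]
  linarith

@[fun_prop]
lemma Real.continuous_tanh : Continuous tanh := by
  rw [show tanh = fun x => sinh x / cosh x from funext tanh_eq_sinh_div_cosh]
  exact continuous_sinh.div continuous_cosh fun x => (cosh_pos x).ne'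

lemma measurePreserving_pi_update {ι α : Type*} [Fintype ι] [DecidableEq ι]
    [MeasurableSpace α] (μ : ι → Measure α) [∀ i, SigmaFinite (μ i)] {i : ι} {f : α → α}
    (hf : MeasurePreserving f (μ i) (μ i)) :
    MeasurePreserving (fun x => update x i (f (x i))) (Measure.pi μ) (Measure.pi μ) := by
  convert measurePreserving_pi μ μ (f := fun j => if j = i then f else id) fun j => by
    split_ifs with h
    · exact h ▸ hf
    · exact .id _ using 1
  funext x j
  by_cases h : j = i <;> simp [h]

lemma measurePreserving_gaussianReal_reflect (m : ℝ) (v : NNReal) :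
    MeasurePreserving (fun x => 2 * m - x) (gaussianReal m v) (gaussianReal m v) :=
  ⟨by fun_prop, by rw [gaussianReal_map_const_sub, two_mul, add_sub_cancel_right]⟩

lemma measurePreserving_gaussianReal_sub_mean (m : ℝ) (v : NNReal) :
    MeasurePreserving (· - m) (gaussianReal m v) (gaussianReal 0 v) :=
  ⟨by fun_prop, by rw [gaussianReal_map_sub_const, sub_self]⟩

lemma integrable_neg_mul_tanh_gaussianReal (β m : ℝ) (v : NNReal) :
    Integrable (fun x => -x * tanh (β * x)) (gaussianReal m v) :=
  ((memLp_id_gaussianReal 1).integrable le_rfl).neg.mul_bdd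
    (by fun_prop : Continuous fun x => tanh (β * x)).aestronglyMeasurable
    (.of_forall fun x => (abs_tanh_lt_one _).le)

lemma integral_le_of_two_mul_le_add_comp {α : Type*} [MeasurableSpace α] {μ : Measure α}
    {T : α → α} (hT : MeasurePreserving T μ μ) {f g : α → ℝ} (hf : Integrable f μ)
    (hg : Integrable g μ) (h : ∀ x, 2 * g x ≤ f x + f (T x)) :
    ∫ x, g x ∂μ ≤ ∫ x, f x ∂μ := by
  have hfT : Integrable (fun x => f (T x)) μ := hT.integrable_comp_of_integrable hf
  have hmono : ∫ x, 2 * g x ∂μ ≤ ∫ x, f x + f (T x) ∂μ :=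
    integral_mono (hg.const_mul 2) (hf.add hfT) h
  rw [integral_const_mul, integral_add hf hfT, ← integral_map hT.aemeasurable
    (by rw [hT.map_eq]; exact hf.aestronglyMeasurable), hT.map_eq] at hmono
  linarith

theorem gaussian_local_energy_lower_bound_general
    {V : Type} [Fintype V] [DecidableEq V]
    (ℬ : Finset (Finset V))
    (β : ℝ) (hβ : 0 < β)
    (J0 : Finset V → ℝ) (Λ : Finset V → NNReal)
    (A : Finset V) (hA : A ∈ ℬ) :
    ∫ J, (J0 A - J ⟨A, hA⟩) * gibbsAvg β ℬ J A ∂(gaussQuenched ℬ J0 Λ)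
      ≥ ∫ x, -x * Real.tanh (β * x) ∂(gaussianReal 0 (Λ A ^ 2)) := by
  set μ := gaussQuenched ℬ J0 Λ
  have : IsProbabilityMeasure μ := by unfold μ gaussQuenched; infer_instance
  have hcoord : MeasurePreserving (fun J : ℬ → ℝ => J ⟨A, hA⟩) μ
      (gaussianReal (J0 A) (Λ A ^ 2)) :=
    measurePreserving_eval _ (⟨A, hA⟩ : ℬ)
  have hcenter : MeasurePreserving (fun J : ℬ → ℝ => J ⟨A, hA⟩ - J0 A) μ
      (gaussianReal 0 (Λ A ^ 2)) :=
    (measurePreserving_gaussianReal_sub_mean _ _).comp hcoord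
  have hreflect : MeasurePreserving
      (fun J : ℬ → ℝ => update J ⟨A, hA⟩ (2 * J0 A - J ⟨A, hA⟩)) μ μ :=
    measurePreserving_pi_update (fun B : ℬ => gaussianReal (J0 B) (Λ B ^ 2))
      (measurePreserving_gaussianReal_reflect (J0 A) _)
  have hlocal := integrable_neg_mul_tanh_gaussianReal β 0 (Λ A ^ 2)
  have henergy : Integrable (fun J : ℬ → ℝ => (J0 A - J ⟨A, hA⟩) * gibbsAvg β ℬ J A) μ :=
    ((integrable_const _).sub
      (hcoord.integrable_comp_of_integrable ((memLp_id_gaussianReal 1).integrable le_rfl))).mul_bdd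
      (by unfold gibbsAvg; fun_prop : Measurable fun J => gibbsAvg β ℬ J A).aestronglyMeasurable
      (.of_forall fun J => abs_gibbsAvg_le_one β ℬ J A)
  rw [ge_iff_le, ← hcenter.map_eq, integral_map hcenter.aemeasurable (hcenter.map_eq ▸ hlocal.1)]
  exact integral_le_of_two_mul_le_add_comp hreflect henergy
    (hcenter.integrable_comp_of_integrable hlocal)
    fun J => two_mul_neg_mul_tanh_le_add_reflect ℬ hβ J hA (J0 A)

/-- **Gaussian couplings.** If every `J_B` is independently Gaussian, `J_B ~ N(J_{0,B}, Λ_B²)`,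
then `E[(J_{0,A} - J_A) ⟨σ_A⟩_J] ≥ E[-J tanh(βJ)]_{N(0, Λ_A²)}`, the right-hand side being
independent of all the means and of all the other interactions. -/
theorem gaussian_local_energy_lower_bound
    {V : Type} [Fintype V] [DecidableEq V]
    (ℬ : Finset (Finset V)) (hℬ : ∀ B ∈ ℬ, B.Nonempty)
    (β : ℝ) (hβ : 0 < β)
    (J0 : Finset V → ℝ) (Λ : Finset V → NNReal) (hΛ : ∀ B, 0 < Λ B)
    (A : Finset V) (hA : A ∈ ℬ) :
    ∫ J, (J0 A - J ⟨A, hA⟩) * gibbsAvg β ℬ J A ∂(gaussQuenched ℬ J0 Λ)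
      ≥ ∫ x, -x * Real.tanh (β * x) ∂(gaussianReal 0 (Λ A ^ 2)) :=
  gaussian_local_energy_lower_bound_general ℬ β hβ J0 Λ A hA
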